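/- arXiv:2206.10973 — 6 statements merged into one kernel-verified Lean document; each statement's English description precedes it below -/
import Mathlib

section
/- Let (Ω,F,P) be a probability space, G ⊆ F a sub-σ-algebra, θ : Ω → {0,1} measurable, and γ : Ω → (0,∞] a random time satisfying the conditional-survival property with respect to G: P({γ>t} ∩ {θ=i} ∩ A) = F_i(t)·P({θ=i} ∩ A) for all t ≥ 0, A ∈ G, i ∈ {0,1}. Set Π := P(θ=1 | G). Then for every G-measurable τ : Ω → [0,∞) and all bounded G-measurable random variables Z_0, Z_1: E[(Z_0·1_{θ=0} + Z_1·1_{θ=1})·1_{τ<γ}] = E[Z_0·(1−Π)·F_0(τ) + Z_1·Π·F_1(τ)]. -/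
open Set MeasureTheory
open scoped ENNReal NNReal

private lemma aux_exists_pow (x : ℝ) (y : ℝ≥0∞) (hx : 0 ≤ x)
    (hxy : ENNReal.ofReal x < y) : ∃ k : ℕ, ENNReal.ofReal (x + ((2:ℝ)^k)⁻¹) < y := by
  rcases eq_or_ne y ∞ with h | h
  · exact ⟨0, h ▸ ENNReal.ofReal_lt_top⟩
  · have hxy' : x < y.toReal := by
      rwa [ENNReal.ofReal_lt_iff_lt_toReal hx h] at hxy
    obtain ⟨k, hk⟩ := pow_unbounded_of_one_lt ((y.toReal - x)⁻¹) (by norm_num : (1:ℝ) < 2)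
    refine ⟨k, ?_⟩
    have h2 : (0:ℝ) < 2 ^ k := by positivity
    have hsub : (0:ℝ) < y.toReal - x := sub_pos.2 hxy'
    have hlt : ((2:ℝ)^k)⁻¹ < y.toReal - x := by
      nlinarith [mul_lt_mul_of_pos_left hk hsub, mul_inv_cancel₀ hsub.ne',
        mul_inv_cancel₀ h2.ne', mul_pos hsub h2]
    rw [← ENNReal.ofReal_toReal h]
    exact (ENNReal.ofReal_lt_ofReal_iff (lt_of_le_of_lt hx hxy')).2 (by linarith)

private lemma meas_comp_antitoneOn {Ω : Type*} {𝒢 : MeasurableSpace Ω} {f : ℝ → ℝ}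
    (hf : AntitoneOn f (Ici 0)) {τ : Ω → ℝ} (hτ : Measurable[𝒢] τ) (hτnn : ∀ ω, 0 ≤ τ ω) :
    Measurable[𝒢] fun ω => f (τ ω) := by
  have h1 : Antitone (fun t : ℝ => f (max t 0)) := fun s t hst =>
    hf (mem_Ici.2 (le_max_right _ _)) (mem_Ici.2 (le_max_right _ _)) (max_le_max hst le_rfl)
  have heq : (fun ω => f (τ ω)) = fun ω => f (max (τ ω) 0) :=
    funext fun ω => by rw [max_eq_left (hτnn ω)]
  rw [heq]
  exact h1.measurable.comp hτ

private lemma integrable_of_bdd {Ω : Type*} {m : MeasurableSpace Ω} {P : Measure Ω}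
    [IsFiniteMeasure P] {f : Ω → ℝ} {C : ℝ} (hm : Measurable f) (h : ∀ ω, |f ω| ≤ C) :
    Integrable f P :=
  ⟨hm.aestronglyMeasurable,
    HasFiniteIntegral.of_bounded (ae_of_all _ fun ω => by
      simpa [Real.norm_eq_abs] using h ω)⟩

private lemma core {Ω : Type*} {m : MeasurableSpace Ω} (P : Measure Ω) [IsProbabilityMeasure P]
    (𝒢 : MeasurableSpace Ω) (h𝒢 : 𝒢 ≤ m)
    (γ : Ω → ℝ≥0∞) (hγmeas : Measurable[m] γ)
    (B : Set Ω) (hB : MeasurableSet[m] B)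
    (f : ℝ → ℝ) (hfanti : AntitoneOn f (Ici 0)) (hfle : ∀ t ≥ (0:ℝ), f t ≤ 1)
    (hsurv : ∀ t ≥ (0 : ℝ), ∀ A : Set Ω, MeasurableSet[𝒢] A →
      P ({ω | ENNReal.ofReal t < γ ω} ∩ B ∩ A) = ENNReal.ofReal (f t) * P (B ∩ A))
    (τ : Ω → ℝ) (hτmeas : @Measurable Ω ℝ 𝒢 _ τ) (hτnn : ∀ ω, 0 ≤ τ ω)
    (A : Set Ω) (hA : MeasurableSet[𝒢] A) :
    P ({ω | ENNReal.ofReal (τ ω) < γ ω} ∩ B ∩ A)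
      = ∫⁻ ω in A ∩ B, ENNReal.ofReal (f (τ ω)) ∂P := by
  by_cases hPB : P B = 0
  · have h1 : P ({ω | ENNReal.ofReal (τ ω) < γ ω} ∩ B ∩ A) = 0 :=
      measure_mono_null (fun ω h => h.1.2) hPB
    have h2 : ∫⁻ ω in A ∩ B, ENNReal.ofReal (f (τ ω)) ∂P = 0 := by
      refine le_antisymm ?_ zero_le
      calc ∫⁻ ω in A ∩ B, ENNReal.ofReal (f (τ ω)) ∂P
          ≤ ∫⁻ _ in A ∩ B, 1 ∂P :=
            lintegral_mono fun ω => ENNReal.ofReal_le_one.2 (hfle _ (hτnn ω))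
        _ = P (A ∩ B) := setLIntegral_one _
        _ = 0 := measure_mono_null inter_subset_right hPB
    rw [h1, h2]
  · -- notation and measurability
    have hτm : Measurable[m] τ := hτmeas.mono h𝒢 le_rfl
    set N : ℕ → Ω → ℕ := fun n ω => ⌈τ ω * 2 ^ n⌉₊ with hN
    set τn : ℕ → Ω → ℝ := fun n ω => (N n ω : ℝ) / 2 ^ n with hτn
    have h2n : ∀ n : ℕ, (0:ℝ) < 2 ^ n := fun n => by positivity
    have hτle : ∀ n ω, τ ω ≤ τn n ω := fun n ω => by
      rw [hτn]; rw [le_div_iff₀ (h2n n)]; exact Nat.le_ceil _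
    have hτub : ∀ n ω, τn n ω ≤ τ ω + ((2:ℝ)^n)⁻¹ := fun n ω => by
      rw [hτn]
      rw [div_le_iff₀ (h2n n)]
      have h := (Nat.ceil_lt_add_one (mul_nonneg (hτnn ω) (h2n n).le)).le
      calc (N n ω : ℝ) ≤ τ ω * 2 ^ n + 1 := h
        _ = (τ ω + ((2:ℝ)^n)⁻¹) * 2 ^ n := by field_simp
    have hτanti : ∀ ω, Antitone fun n => τn n ω := by
      intro ω
      refine antitone_nat_of_succ_le fun n => ?_
      rw [hτn]
      rw [div_le_div_iff₀ (h2n (n+1)) (h2n n)]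
      have hle : (N (n+1) ω : ℝ) ≤ 2 * N n ω := by
        have : ((⌈τ ω * 2 ^ (n+1)⌉₊ : ℕ) : ℝ) ≤ ((2 * ⌈τ ω * 2 ^ n⌉₊ : ℕ) : ℝ) := by
          have : ⌈τ ω * 2 ^ (n+1)⌉₊ ≤ 2 * ⌈τ ω * 2 ^ n⌉₊ :=
            Nat.ceil_le.2 (by push_cast; rw [pow_succ]; nlinarith [Nat.le_ceil (τ ω * 2 ^ n)])
          exact_mod_cast this
        simpa [hN] using this
      have h2 : ((2:ℝ) ^ (n+1)) = 2 ^ n * 2 := by rw [pow_succ]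
      nlinarith [h2n n]
    have hτn_nonneg : ∀ n ω, 0 ≤ τn n ω := fun n ω => by rw [hτn]; positivity
    have hNmeas : ∀ n, @Measurable Ω ℕ 𝒢 _ (N n) := fun n => (hτmeas.mul_const _).nat_ceil
    have hτnmeas : ∀ n, @Measurable Ω ℝ 𝒢 _ (τn n) := fun n =>
      (measurable_from_top.comp (hNmeas n)).div_const _
    -- step lemma at discrete times
    have hstep : ∀ n : ℕ,
        P ({ω | ENNReal.ofReal (τn n ω) < γ ω} ∩ B ∩ A)
          = ∫⁻ ω in A ∩ B, ENNReal.ofReal (f (τn n ω)) ∂P := by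
      intro n
      set E : ℕ → Set Ω := fun k => A ∩ (N n) ⁻¹' {k} with hE
      have hEmeas𝒢 : ∀ k, @MeasurableSet Ω 𝒢 (E k) := fun k =>
        hA.inter ((hNmeas n) (measurableSet_singleton k))
      have hEmeas : ∀ k, MeasurableSet[m] (E k) := fun k => h𝒢 _ (hEmeas𝒢 k)
      have hEdisj : Pairwise (Function.onFun Disjoint E) := by
        intro j k hjk
        refine Set.disjoint_left.2 fun ω hj hk => hjk ?_
        have h1 : N n ω = j := hj.2
        have h2 : N n ω = k := hk.2
        rw [← h1, ← h2]
      have hτnE : ∀ k ω, ω ∈ E k → τn n ω = (k : ℝ) / 2 ^ n := by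
        intro k ω hω
        have h : N n ω = k := hω.2
        show (N n ω : ℝ) / 2 ^ n = _
        rw [h]
      have hcnn : ∀ k : ℕ, (0:ℝ) ≤ (k : ℝ) / 2 ^ n := fun k => by positivity
      have hLset : {ω | ENNReal.ofReal (τn n ω) < γ ω} ∩ B ∩ A
          = ⋃ k : ℕ, ({ω | ENNReal.ofReal ((k:ℝ) / 2 ^ n) < γ ω} ∩ B ∩ E k) := by
        ext ω
        simp only [mem_iUnion, mem_inter_iff, mem_setOf_eq]
        constructor
        · rintro ⟨⟨h1, h2⟩, h3⟩
          refine ⟨N n ω, ⟨?_, h2⟩, h3, rfl⟩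
          have : τn n ω = (N n ω : ℝ) / 2 ^ n := rfl
          rwa [this] at h1
        · rintro ⟨k, ⟨h1, h2⟩, h3, h4⟩
          have heq : τn n ω = (k : ℝ) / 2 ^ n := hτnE k ω ⟨h3, h4⟩
          exact ⟨⟨by rwa [heq], h2⟩, h3⟩
      have hsetmeas : ∀ k : ℕ, MeasurableSet[m]
          ({ω | ENNReal.ofReal ((k:ℝ) / 2 ^ n) < γ ω} ∩ B ∩ E k) := fun k =>
        ((measurableSet_lt measurable_const hγmeas).inter hB).inter (hEmeas k)
      have hdisj' : Pairwise (Function.onFun Disjoint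
          fun k : ℕ => {ω | ENNReal.ofReal ((k:ℝ) / 2 ^ n) < γ ω} ∩ B ∩ E k) := by
        intro j k hjk
        exact (hEdisj hjk).mono inter_subset_right inter_subset_right
      rw [hLset, measure_iUnion hdisj' hsetmeas]
      have hRset : A ∩ B = ⋃ k, (E k ∩ B) := by
        have hEunion : (⋃ k, E k) = A := by
          ext ω
          simp [hE]
        rw [← hEunion, iUnion_inter]
      have hRdisj : Pairwise (Function.onFun Disjoint fun k => E k ∩ B) := by
        intro j k hjk
        exact (hEdisj hjk).mono inter_subset_left inter_subset_left
      rw [hRset, lintegral_iUnion (fun k => (hEmeas k).inter hB) hRdisj]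
      refine tsum_congr fun k => ?_
      rw [hsurv ((k:ℝ) / 2 ^ n) (hcnn k) (E k) (hEmeas𝒢 k)]
      have : ∫⁻ ω in E k ∩ B, ENNReal.ofReal (f (τn n ω)) ∂P
          = ∫⁻ _ in E k ∩ B, ENNReal.ofReal (f ((k:ℝ) / 2 ^ n)) ∂P := by
        refine setLIntegral_congr_fun_ae ((hEmeas k).inter hB) (ae_of_all _ fun ω hω => ?_)
        rw [hτnE k ω hω.1]
      rw [this, setLIntegral_const, inter_comm B (E k)]
    -- right continuity
    have hrc : ∀ t, 0 ≤ t →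
        (⨆ k : ℕ, ENNReal.ofReal (f (t + ((2:ℝ)^k)⁻¹))) = ENNReal.ofReal (f t) := by
      intro t ht
      have hmono : Monotone fun k : ℕ =>
          {ω | ENNReal.ofReal (t + ((2:ℝ)^k)⁻¹) < γ ω} ∩ B := by
        intro j k hjk
        refine inter_subset_inter_left _ fun ω hω => ?_
        have hpow : ((2:ℝ)^k)⁻¹ ≤ ((2:ℝ)^j)⁻¹ :=
          inv_anti₀ (h2n j) (pow_le_pow_right₀ (by norm_num) hjk)
        exact lt_of_le_of_lt (ENNReal.ofReal_le_ofReal (by linarith)) hω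
      have hU : (⋃ k, ({ω | ENNReal.ofReal (t + ((2:ℝ)^k)⁻¹) < γ ω} ∩ B))
          = {ω | ENNReal.ofReal t < γ ω} ∩ B := by
        ext ω
        simp only [mem_iUnion, mem_inter_iff, mem_setOf_eq]
        constructor
        · rintro ⟨k, hk, hBω⟩
          refine ⟨lt_of_le_of_lt (ENNReal.ofReal_le_ofReal ?_) hk, hBω⟩
          have : (0:ℝ) ≤ ((2:ℝ)^k)⁻¹ := by positivity
          linarith
        · rintro ⟨h1, h2⟩
          obtain ⟨k, hk⟩ := aux_exists_pow t (γ ω) ht h1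
          exact ⟨k, hk, h2⟩
      have hμU := hmono.directed_le.measure_iUnion (μ := P)
      rw [hU] at hμU
      have hL : P ({ω | ENNReal.ofReal t < γ ω} ∩ B) = ENNReal.ofReal (f t) * P B := by
        simpa using hsurv t ht univ MeasurableSet.univ
      have hR : ∀ k : ℕ, P ({ω | ENNReal.ofReal (t + ((2:ℝ)^k)⁻¹) < γ ω} ∩ B)
          = ENNReal.ofReal (f (t + ((2:ℝ)^k)⁻¹)) * P B := fun k => by
        simpa using hsurv _ (by positivity) univ MeasurableSet.univ
      rw [hL] at hμU
      simp_rw [hR] at hμU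
      rw [← ENNReal.iSup_mul] at hμU
      exact ((ENNReal.mul_left_inj hPB (measure_ne_top P B)).1 hμU.symm)
    -- pointwise sup
    have hsup : ∀ ω, (⨆ n : ℕ, ENNReal.ofReal (f (τn n ω))) = ENNReal.ofReal (f (τ ω)) := by
      intro ω
      refine le_antisymm (iSup_le fun n => ENNReal.ofReal_le_ofReal
        (hfanti (hτnn ω) (hτn_nonneg n ω) (hτle n ω))) ?_
      rw [← hrc (τ ω) (hτnn ω)]
      refine iSup_le fun k => le_iSup_of_le k (ENNReal.ofReal_le_ofReal ?_)
      refine hfanti (hτn_nonneg k ω) ?_ (hτub k ω)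
      have : (0:ℝ) ≤ ((2:ℝ)^k)⁻¹ := by positivity
      have := hτnn ω
      simp only [mem_Ici]; linarith
    -- monotone union of events
    have hmonoV : Monotone fun n : ℕ =>
        {ω | ENNReal.ofReal (τn n ω) < γ ω} ∩ B ∩ A := by
      intro j k hjk
      refine inter_subset_inter_left _ (inter_subset_inter_left _ fun ω hω => ?_)
      exact lt_of_le_of_lt (ENNReal.ofReal_le_ofReal (hτanti ω hjk)) hω
    have hUV : (⋃ n, ({ω | ENNReal.ofReal (τn n ω) < γ ω} ∩ B ∩ A))
        = {ω | ENNReal.ofReal (τ ω) < γ ω} ∩ B ∩ A := by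
      ext ω
      simp only [mem_iUnion, mem_inter_iff, mem_setOf_eq]
      constructor
      · rintro ⟨n, ⟨h1, h2⟩, h3⟩
        exact ⟨⟨lt_of_le_of_lt (ENNReal.ofReal_le_ofReal (hτle n ω)) h1, h2⟩, h3⟩
      · rintro ⟨⟨h1, h2⟩, h3⟩
        obtain ⟨k, hk⟩ := aux_exists_pow (τ ω) (γ ω) (hτnn ω) h1
        exact ⟨k, ⟨lt_of_le_of_lt (ENNReal.ofReal_le_ofReal (hτub k ω)) hk, h2⟩, h3⟩
    -- measurability of integrands
    have hfτnmeas : ∀ n : ℕ, Measurable[m] fun ω => ENNReal.ofReal (f (τn n ω)) := by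
      intro n
      have h1 : Antitone (fun t : ℝ => f (max t 0)) := fun s t hst =>
        hfanti (mem_Ici.2 (le_max_right _ _)) (mem_Ici.2 (le_max_right _ _)) (max_le_max hst le_rfl)
      have heq : (fun ω => ENNReal.ofReal (f (τn n ω)))
          = fun ω => ENNReal.ofReal (f (max (τn n ω) 0)) :=
        funext fun ω => by rw [max_eq_left (hτn_nonneg n ω)]
      rw [heq]
      exact ENNReal.measurable_ofReal.comp
        (h1.measurable.comp ((hτnmeas n).mono h𝒢 le_rfl))
    have hmonoF : Monotone fun (n : ℕ) (ω : Ω) => ENNReal.ofReal (f (τn n ω)) := by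
      intro j k hjk ω
      exact ENNReal.ofReal_le_ofReal
        (hfanti (hτn_nonneg k ω) (hτn_nonneg j ω) (hτanti ω hjk))
    calc P ({ω | ENNReal.ofReal (τ ω) < γ ω} ∩ B ∩ A)
        = P (⋃ n, ({ω | ENNReal.ofReal (τn n ω) < γ ω} ∩ B ∩ A)) := by rw [hUV]
      _ = ⨆ n, P ({ω | ENNReal.ofReal (τn n ω) < γ ω} ∩ B ∩ A) :=
          hmonoV.directed_le.measure_iUnion
      _ = ⨆ n, ∫⁻ ω in A ∩ B, ENNReal.ofReal (f (τn n ω)) ∂P := iSup_congr hstep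
      _ = ∫⁻ ω in A ∩ B, ⨆ n, ENNReal.ofReal (f (τn n ω)) ∂P :=
          (lintegral_iSup (fun n => hfτnmeas n) hmonoF).symm
      _ = ∫⁻ ω in A ∩ B, ENNReal.ofReal (f (τ ω)) ∂P := lintegral_congr fun ω => hsup ω

/-- Filtering identity for the pre-horizon payoff term:
`E[(Z₀ 1_{θ=0} + Z₁ 1_{θ=1}) 1_{τ<γ}] = E[Z₀ (1-Π) F₀(τ) + Z₁ Π F₁(τ)]`. -/
theorem stmt_2 {Ω : Type*} (𝒢 : MeasurableSpace Ω) {m : MeasurableSpace Ω} (P : Measure Ω) [IsProbabilityMeasure P]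
    (h𝒢 : 𝒢 ≤ m)
    (θ : Ω → ℕ) (hθmeas : Measurable θ) (hθval : ∀ ω, θ ω = 0 ∨ θ ω = 1)
    (γ : Ω → ℝ≥0∞) (hγmeas : Measurable γ) (hγpos : ∀ ω, 0 < γ ω)
    (F : ℕ → ℝ → ℝ)
    (hFanti : ∀ i, AntitoneOn (F i) (Ici 0))
    (hFone : ∀ i, F i 0 = 1)
    (hFpos : ∀ i, ∀ t ≥ (0 : ℝ), 0 < F i t)
    (hFle : ∀ i, ∀ t ≥ (0 : ℝ), F i t ≤ 1)
    (hsurv : ∀ i ∈ ({0, 1} : Set ℕ), ∀ t ≥ (0 : ℝ), ∀ A : Set Ω, MeasurableSet[𝒢] A →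
      P ({ω | ENNReal.ofReal t < γ ω} ∩ {ω | θ ω = i} ∩ A)
        = ENNReal.ofReal (F i t) * P ({ω | θ ω = i} ∩ A))
    (Pi1 : Ω → ℝ) (hPi1 : Pi1 = P[fun ω => if θ ω = 1 then (1 : ℝ) else 0 | 𝒢])
    (τ : Ω → ℝ) (hτmeas : Measurable[𝒢] τ) (hτnn : ∀ ω, 0 ≤ τ ω)
    (Z : ℕ → Ω → ℝ) (hZmeas : ∀ i, Measurable[𝒢] (Z i))
    (hZbdd : ∀ i, ∃ C : ℝ, ∀ ω, |Z i ω| ≤ C) :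
    ∫ ω, (Z 0 ω * (if θ ω = 0 then 1 else 0) + Z 1 ω * (if θ ω = 1 then 1 else 0))
        * (if ENNReal.ofReal (τ ω) < γ ω then 1 else 0) ∂P
      = ∫ ω, (Z 0 ω * (1 - Pi1 ω) * F 0 (τ ω) + Z 1 ω * Pi1 ω * F 1 (τ ω)) ∂P := by
  letI : MeasurableSpace Ω := m
  have hγm : Measurable[m] γ := hγmeas
  have hτm : Measurable[m] τ := hτmeas.mono h𝒢 le_rfl
  have hS : MeasurableSet[m] {ω | ENNReal.ofReal (τ ω) < γ ω} :=
    measurableSet_lt (ENNReal.measurable_ofReal.comp hτm) hγm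
  have hBm : ∀ i : ℕ, MeasurableSet[m] {ω | θ ω = i} := fun i =>
    hθmeas (measurableSet_singleton i)
  have hXm : ∀ i : ℕ, Measurable[m] fun ω => (if θ ω = i then (1:ℝ) else 0) := fun i =>
    Measurable.ite (hBm i) measurable_const measurable_const
  have hXbd : ∀ (i : ℕ) ω, |if θ ω = i then (1:ℝ) else 0| ≤ 1 := fun i ω => by
    by_cases h : θ ω = i <;> simp [h]
  have hXint : ∀ i : ℕ, Integrable (fun ω => if θ ω = i then (1:ℝ) else 0) P := fun i =>
    integrable_of_bdd (hXm i) (hXbd i)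
  have hZm : ∀ i, Measurable[m] (Z i) := fun i => (hZmeas i).mono h𝒢 le_rfl
  have hfτ𝒢 : ∀ i, @Measurable Ω ℝ 𝒢 _ (fun ω => F i (τ ω)) := fun i =>
    meas_comp_antitoneOn (hFanti i) hτmeas hτnn
  have hfτm : ∀ i, Measurable[m] fun ω => F i (τ ω) := fun i => (hfτ𝒢 i).mono h𝒢 le_rfl
  have hFbd : ∀ (i : ℕ) ω, |F i (τ ω)| ≤ 1 := fun i ω =>
    abs_le.2 ⟨by nlinarith [hFpos i (τ ω) (hτnn ω)], hFle i (τ ω) (hτnn ω)⟩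
  have hSxbd : ∀ ω, |if ENNReal.ofReal (τ ω) < γ ω then (1:ℝ) else 0| ≤ 1 := fun ω => by
    by_cases h : ENNReal.ofReal (τ ω) < γ ω <;> simp [h]
  have hSxm : Measurable[m] fun ω => (if ENNReal.ofReal (τ ω) < γ ω then (1:ℝ) else 0) :=
    Measurable.ite hS measurable_const measurable_const
  -- the key identity for each state i
  have key : ∀ i ∈ ({0, 1} : Set ℕ),
      ∫ ω, Z i ω * (if θ ω = i then (1:ℝ) else 0)
          * (if ENNReal.ofReal (τ ω) < γ ω then (1:ℝ) else 0) ∂P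
        = ∫ ω, Z i ω * F i (τ ω)
            * (P[fun ω => if θ ω = i then (1:ℝ) else 0|𝒢]) ω ∂P := by
    intro i hi
    obtain ⟨C, hC⟩ := hZbdd i
    have hC' : ∀ ω, |Z i ω| ≤ |C| := fun ω => (hC ω).trans (le_abs_self C)
    have hSB : MeasurableSet[m] ({ω | ENNReal.ofReal (τ ω) < γ ω} ∩ {ω | θ ω = i}) :=
      hS.inter (hBm i)
    have h1 : (fun ω => Z i ω * (if θ ω = i then (1:ℝ) else 0)
          * (if ENNReal.ofReal (τ ω) < γ ω then (1:ℝ) else 0))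
        = ({ω | ENNReal.ofReal (τ ω) < γ ω} ∩ {ω | θ ω = i}).indicator (Z i) := by
      funext ω
      by_cases ht : ENNReal.ofReal (τ ω) < γ ω <;> by_cases hθi : θ ω = i <;>
        simp [Set.indicator_apply, ht, hθi]
    rw [h1, integral_indicator hSB]
    set gE : Ω → ℝ≥0∞ := fun ω => if θ ω = i then ENNReal.ofReal (F i (τ ω)) else 0 with hgE
    have hgEind : gE = ({ω | θ ω = i}).indicator fun ω => ENNReal.ofReal (F i (τ ω)) := by
      funext ω; by_cases hθi : θ ω = i <;> simp [hgE, Set.indicator_apply, hθi]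
    have htrim : ∀ s : Set Ω, MeasurableSet[𝒢] s →
        P (({ω | ENNReal.ofReal (τ ω) < γ ω} ∩ {ω | θ ω = i}) ∩ s)
          = (P.withDensity gE) s := by
      intro s hs
      rw [withDensity_apply _ (h𝒢 _ hs)]
      have h2 : ∫⁻ ω in s, gE ω ∂P
          = ∫⁻ ω in s ∩ {ω | θ ω = i}, ENNReal.ofReal (F i (τ ω)) ∂P := by
        rw [hgEind, ← lintegral_indicator (h𝒢 _ hs), Set.indicator_indicator,
          lintegral_indicator ((h𝒢 _ hs).inter (hBm i))]
      rw [h2]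
      exact core P 𝒢 h𝒢 γ hγm _ (hBm i) (F i) (hFanti i) (hFle i) (hsurv i hi)
        τ hτmeas hτnn s hs
    have htrimeq : (P.restrict ({ω | ENNReal.ofReal (τ ω) < γ ω} ∩ {ω | θ ω = i})).trim h𝒢
        = (P.withDensity gE).trim h𝒢 := by
      refine @Measure.ext Ω 𝒢 _ _ fun s hs => ?_
      rw [trim_measurableSet_eq h𝒢 hs, trim_measurableSet_eq h𝒢 hs,
        Measure.restrict_apply' hSB, inter_comm]
      exact htrim s hs
    have hZsm : StronglyMeasurable[𝒢] (Z i) := (hZmeas i).stronglyMeasurable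
    have e1 : ∫ ω in {ω | ENNReal.ofReal (τ ω) < γ ω} ∩ {ω | θ ω = i}, Z i ω ∂P
        = ∫ ω, Z i ω ∂(P.withDensity gE) := by
      calc ∫ ω in {ω | ENNReal.ofReal (τ ω) < γ ω} ∩ {ω | θ ω = i}, Z i ω ∂P
          = ∫ ω, Z i ω ∂((P.restrict
              ({ω | ENNReal.ofReal (τ ω) < γ ω} ∩ {ω | θ ω = i})).trim h𝒢) :=
            integral_trim h𝒢 hZsm
        _ = ∫ ω, Z i ω ∂((P.withDensity gE).trim h𝒢) := by rw [htrimeq]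
        _ = ∫ ω, Z i ω ∂(P.withDensity gE) := (integral_trim h𝒢 hZsm).symm
    set gN : Ω → ℝ≥0 := fun ω => if θ ω = i then Real.toNNReal (F i (τ ω)) else 0 with hgN
    have hgNmeas : Measurable[m] gN :=
      Measurable.ite (hBm i) (measurable_real_toNNReal.comp (hfτm i)) measurable_const
    have hgEgN : gE = fun ω => (gN ω : ℝ≥0∞) := by
      funext ω; by_cases hθi : θ ω = i <;> simp [hgE, hgN, hθi, ENNReal.ofReal]
    have e2 : ∫ ω, Z i ω ∂(P.withDensity gE) = ∫ ω, gN ω • Z i ω ∂P := by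
      rw [hgEgN]; exact integral_withDensity_eq_integral_smul hgNmeas (Z i)
    have e3 : (fun ω => gN ω • Z i ω)
        = fun ω => (Z i ω * F i (τ ω)) * (if θ ω = i then (1:ℝ) else 0) := by
      funext ω
      by_cases hθi : θ ω = i <;>
        simp [hgN, hθi, NNReal.smul_def, Real.coe_toNNReal _ (hFpos i _ (hτnn ω)).le,
          mul_comm]
    have hW : StronglyMeasurable[𝒢] fun ω => Z i ω * F i (τ ω) :=
      ((hZmeas i).mul (hfτ𝒢 i)).stronglyMeasurable
    have hWXint : Integrable ((fun ω => Z i ω * F i (τ ω))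
        * fun ω => if θ ω = i then (1:ℝ) else 0) P := by
      refine integrable_of_bdd (C := |C|) (((hZm i).mul (hfτm i)).mul (hXm i)) fun ω => ?_
      have h3 := hXbd i ω
      have h4 := hFbd i ω
      have h5 := hC' ω
      calc |Z i ω * F i (τ ω) * (if θ ω = i then (1:ℝ) else 0)|
          = |Z i ω| * |F i (τ ω)| * |if θ ω = i then (1:ℝ) else 0| := by
            rw [abs_mul, abs_mul]
        _ ≤ |C| * 1 * 1 := by
            exact mul_le_mul (mul_le_mul h5 h4 (abs_nonneg _) (abs_nonneg _)) h3
              (abs_nonneg _) (by positivity)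
        _ = |C| := by ring
    have hmul := condExp_mul_of_stronglyMeasurable_left hW hWXint (hXint i)
    calc ∫ ω in {ω | ENNReal.ofReal (τ ω) < γ ω} ∩ {ω | θ ω = i}, Z i ω ∂P
        = ∫ ω, Z i ω ∂(P.withDensity gE) := e1
      _ = ∫ ω, gN ω • Z i ω ∂P := e2
      _ = ∫ ω, ((fun ω => Z i ω * F i (τ ω))
            * fun ω => if θ ω = i then (1:ℝ) else 0) ω ∂P := by rw [e3]; rfl
      _ = ∫ ω, (P[(fun ω => Z i ω * F i (τ ω))
            * fun ω => if θ ω = i then (1:ℝ) else 0|𝒢]) ω ∂P :=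
            (integral_condExp h𝒢).symm
      _ = ∫ ω, ((fun ω => Z i ω * F i (τ ω))
            * P[fun ω => if θ ω = i then (1:ℝ) else 0|𝒢]) ω ∂P :=
            integral_congr_ae hmul
      _ = ∫ ω, Z i ω * F i (τ ω)
            * (P[fun ω => if θ ω = i then (1:ℝ) else 0|𝒢]) ω ∂P := rfl
  -- conditional probability of state 0
  have hX0ae : (P[fun ω => if θ ω = 0 then (1:ℝ) else 0|𝒢]) =ᵐ[P] fun ω => 1 - Pi1 ω := by
    have hpt : (fun ω => if θ ω = 0 then (1:ℝ) else 0)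
        = (fun _ : Ω => (1:ℝ)) - fun ω => if θ ω = 1 then (1:ℝ) else 0 := by
      funext ω; rcases hθval ω with h | h <;> simp [h]
    rw [hpt]
    calc P[(fun _ : Ω => (1:ℝ)) - fun ω => if θ ω = 1 then (1:ℝ) else 0|𝒢]
        =ᵐ[P] P[fun _ : Ω => (1:ℝ)|𝒢] - P[fun ω => if θ ω = 1 then (1:ℝ) else 0|𝒢] :=
          condExp_sub (integrable_const 1) (hXint 1) 𝒢
      _ =ᵐ[P] fun ω => 1 - Pi1 ω := by
          rw [condExp_const h𝒢, hPi1]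
          exact ae_of_all _ fun ω => rfl
  -- split left-hand side
  obtain ⟨C0, hC0⟩ := hZbdd 0
  obtain ⟨C1, hC1⟩ := hZbdd 1
  have hint : ∀ i ∈ ({0, 1} : Set ℕ), ∀ C : ℝ, (∀ ω, |Z i ω| ≤ C) →
      Integrable (fun ω => Z i ω * (if θ ω = i then (1:ℝ) else 0)
        * (if ENNReal.ofReal (τ ω) < γ ω then (1:ℝ) else 0)) P := by
    intro i _ C hC
    refine integrable_of_bdd (C := |C|) (((hZm i).mul (hXm i)).mul hSxm) fun ω => ?_
    calc |Z i ω * (if θ ω = i then (1:ℝ) else 0)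
          * (if ENNReal.ofReal (τ ω) < γ ω then (1:ℝ) else 0)|
        = |Z i ω| * |if θ ω = i then (1:ℝ) else 0|
          * |if ENNReal.ofReal (τ ω) < γ ω then (1:ℝ) else 0| := by rw [abs_mul, abs_mul]
      _ ≤ |C| * 1 * 1 := mul_le_mul
          (mul_le_mul ((hC ω).trans (le_abs_self C)) (hXbd i ω) (abs_nonneg _) (abs_nonneg _))
          (hSxbd ω) (abs_nonneg _) (by positivity)
      _ = |C| := by ring
  have hsplit : ∫ ω, (Z 0 ω * (if θ ω = 0 then (1:ℝ) else 0)
        + Z 1 ω * (if θ ω = 1 then (1:ℝ) else 0))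
        * (if ENNReal.ofReal (τ ω) < γ ω then (1:ℝ) else 0) ∂P
      = (∫ ω, Z 0 ω * (if θ ω = 0 then (1:ℝ) else 0)
          * (if ENNReal.ofReal (τ ω) < γ ω then (1:ℝ) else 0) ∂P)
        + ∫ ω, Z 1 ω * (if θ ω = 1 then (1:ℝ) else 0)
          * (if ENNReal.ofReal (τ ω) < γ ω then (1:ℝ) else 0) ∂P := by
    rw [← integral_add (hint 0 (by simp) C0 hC0) (hint 1 (by simp) C1 hC1)]
    congr 1
    funext ω
    ring
  rw [hsplit, key 0 (by simp), key 1 (by simp)]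
  -- rewrite the two conditional expectations
  have t0 : ∫ ω, Z 0 ω * F 0 (τ ω) * (P[fun ω => if θ ω = 0 then (1:ℝ) else 0|𝒢]) ω ∂P
      = ∫ ω, Z 0 ω * (1 - Pi1 ω) * F 0 (τ ω) ∂P := by
    refine integral_congr_ae ?_
    filter_upwards [hX0ae] with ω hω
    rw [hω]; ring
  have t1 : ∫ ω, Z 1 ω * F 1 (τ ω) * (P[fun ω => if θ ω = 1 then (1:ℝ) else 0|𝒢]) ω ∂P
      = ∫ ω, Z 1 ω * Pi1 ω * F 1 (τ ω) ∂P := by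
    refine integral_congr_ae (ae_of_all _ fun ω => ?_)
    rw [hPi1]; ring
  rw [t0, t1]
  -- combine the right-hand side
  have hPi1int : Integrable Pi1 P := hPi1 ▸ integrable_condExp
  have ia : Integrable (fun ω => Z 0 ω * (1 - Pi1 ω) * F 0 (τ ω)) P := by
    have : Integrable (fun ω => (Z 0 ω * F 0 (τ ω)) * (1 - Pi1 ω)) P := by
      refine Integrable.bdd_mul (c := |C0|) ((integrable_const (1:ℝ)).sub hPi1int)
        ((hZm 0).mul (hfτm 0)).aestronglyMeasurable (ae_of_all _ fun ω => ?_)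
      calc ‖Z 0 ω * F 0 (τ ω)‖ = |Z 0 ω| * |F 0 (τ ω)| := abs_mul _ _
        _ ≤ |C0| * 1 := mul_le_mul ((hC0 ω).trans (le_abs_self C0)) (hFbd 0 ω)
            (abs_nonneg _) (abs_nonneg _)
        _ = |C0| := by ring
    exact this.congr (ae_of_all _ fun ω => by ring)
  have ib : Integrable (fun ω => Z 1 ω * Pi1 ω * F 1 (τ ω)) P := by
    have : Integrable (fun ω => (Z 1 ω * F 1 (τ ω)) * Pi1 ω) P := by
      refine Integrable.bdd_mul (c := |C1|) hPi1int
        ((hZm 1).mul (hfτm 1)).aestronglyMeasurable (ae_of_all _ fun ω => ?_)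
      calc ‖Z 1 ω * F 1 (τ ω)‖ = |Z 1 ω| * |F 1 (τ ω)| := abs_mul _ _
        _ ≤ |C1| * 1 := mul_le_mul ((hC1 ω).trans (le_abs_self C1)) (hFbd 1 ω)
            (abs_nonneg _) (abs_nonneg _)
        _ = |C1| := by ring
    exact this.congr (ae_of_all _ fun ω => by ring)
  rw [← integral_add ia ib]
end

section
/- Let (Ω,F,P) be a probability space, G ⊆ F a sub-σ-algebra, θ : Ω → {0,1} measurable, and γ : Ω → (0,∞] a random time satisfying the conditional-survival property with respect to G: P({γ>t} ∩ {θ=i} ∩ A) = F_i(t)·P({θ=i} ∩ A) for all t ≥ 0, A ∈ G, i ∈ {0,1}, where F_0 and F_1 are continuous. Then for every G-measurable τ : Ω → [0,∞]: P(τ = γ and γ < ∞) = 0. -/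
open Set MeasureTheory
open scoped ENNReal NNReal

/-- For `0 < x ≤ T` there is a grid interval `(k T/M, (k+1) T/M]` containing `x`. -/
lemma stmt_5_aux_grid {x T : ℝ} {M : ℕ} (hM : 0 < M) (hT : 0 < T)
    (hx0 : 0 < x) (hxT : x ≤ T) :
    ∃ k < M, (k : ℝ) * T / M < x ∧ x ≤ ((k : ℝ) + 1) * T / M := by
  have hMR : (0 : ℝ) < M := Nat.cast_pos.mpr hM
  set y := x * M / T with hy
  have hy0 : 0 < y := by positivity
  have hyM : y ≤ M := by
    rw [hy, div_le_iff₀ hT]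
    nlinarith
  have hc1 : 1 ≤ ⌈y⌉₊ := Nat.one_le_iff_ne_zero.mpr (by positivity)
  refine ⟨⌈y⌉₊ - 1, ?_, ?_, ?_⟩
  · have : ⌈y⌉₊ ≤ M := Nat.ceil_le.mpr hyM
    omega
  · have hlt : ((⌈y⌉₊ - 1 : ℕ) : ℝ) < y := Nat.lt_ceil.mp (by omega)
    rw [div_lt_iff₀ hMR]
    calc ((⌈y⌉₊ - 1 : ℕ) : ℝ) * T < y * T := by nlinarith
      _ = x * M := by rw [hy]; field_simp
  · have hle : y ≤ ((⌈y⌉₊ - 1 : ℕ) : ℝ) + 1 := by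
      have := Nat.le_ceil y
      have : (⌈y⌉₊ : ℝ) = ((⌈y⌉₊ - 1 : ℕ) : ℝ) + 1 := by
        push_cast [Nat.cast_sub hc1]; ring
      linarith [Nat.le_ceil y, this.symm.le]
    rw [le_div_iff₀ hMR]
    calc x * M = y * T := by rw [hy]; field_simp
      _ ≤ (((⌈y⌉₊ - 1 : ℕ) : ℝ) + 1) * T := by nlinarith

/-- With continuous survival functions, a `𝒢`-measurable random time `τ` never
coincides with the finite random horizon `γ`: `P(τ = γ, γ < ∞) = 0`. -/
theorem stmt_5 {Ω : Type*} (𝒢 : MeasurableSpace Ω) {m : MeasurableSpace Ω} (P : Measure Ω) [IsProbabilityMeasure P]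
    (h𝒢 : 𝒢 ≤ m)
    (θ : Ω → ℕ) (hθmeas : Measurable θ) (hθval : ∀ ω, θ ω = 0 ∨ θ ω = 1)
    (γ : Ω → ℝ≥0∞) (hγmeas : Measurable γ) (hγpos : ∀ ω, 0 < γ ω)
    (F : ℕ → ℝ → ℝ)
    (hFanti : ∀ i, AntitoneOn (F i) (Ici 0))
    (hFone : ∀ i, F i 0 = 1)
    (hFpos : ∀ i, ∀ t ≥ (0 : ℝ), 0 < F i t)
    (hFle : ∀ i, ∀ t ≥ (0 : ℝ), F i t ≤ 1)
    (hFcont : ∀ i, Continuous (F i))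
    (hsurv : ∀ i ∈ ({0, 1} : Set ℕ), ∀ t ≥ (0 : ℝ), ∀ A : Set Ω, MeasurableSet[𝒢] A →
      P ({ω | ENNReal.ofReal t < γ ω} ∩ {ω | θ ω = i} ∩ A)
        = ENNReal.ofReal (F i t) * P ({ω | θ ω = i} ∩ A))
    (τ : Ω → ℝ≥0∞) (hτmeas : Measurable[𝒢] τ) :
    P {ω | τ ω = γ ω ∧ γ ω < ⊤} = 0 := by
  -- Main step: for each finite horizon T > 0 the event has measure zero.
  have main : ∀ T : ℝ, 0 < T → P {ω | τ ω = γ ω ∧ γ ω ≤ ENNReal.ofReal T} = 0 := by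
    intro T hT
    refine le_antisymm ?_ (zero_le)
    refine ENNReal.le_of_forall_pos_le_add fun ε hε _ => ?_
    rw [zero_add]
    set εr : ℝ := (ε : ℝ) / 2 with hεr
    have hεr0 : 0 < εr := by positivity
    -- uniform continuity of each F i on [0, T]
    have hUC : ∀ i : ℕ, ∃ δ > 0, ∀ s ∈ Icc (0:ℝ) T, ∀ t ∈ Icc (0:ℝ) T,
        |s - t| < δ → |F i s - F i t| < εr := by
      intro i
      have h1 : UniformContinuousOn (F i) (Icc 0 T) :=
        (isCompact_Icc).uniformContinuousOn_of_continuous (hFcont i).continuousOn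
      rw [Metric.uniformContinuousOn_iff] at h1
      obtain ⟨δ, hδ0, hδ⟩ := h1 εr hεr0
      exact ⟨δ, hδ0, fun s hs t ht hst => by
        simpa [Real.dist_eq] using hδ s hs t ht (by simpa [Real.dist_eq] using hst)⟩
    obtain ⟨δ0, hδ00, hδ0⟩ := hUC 0
    obtain ⟨δ1, hδ10, hδ1⟩ := hUC 1
    set δ : ℝ := min δ0 δ1 with hδdef
    have hδ0' : 0 < δ := lt_min hδ00 hδ10
    obtain ⟨M, hM⟩ := exists_nat_gt (T / δ)
    have hM0 : 0 < M := by
      have : (0:ℝ) < T / δ := by positivity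
      exact_mod_cast lt_of_le_of_lt this.le hM |>.trans_le le_rfl |> fun h => Nat.cast_pos.mp h
    have hMR : (0 : ℝ) < M := Nat.cast_pos.mpr hM0
    have hmesh : T / M < δ := by
      rw [div_lt_iff₀ hMR]
      have := (div_lt_iff₀ hδ0').mp hM
      linarith
    -- the grid
    set g : ℕ → ℝ := fun k => (k : ℝ) * T / M with hg
    have hg0 : ∀ k, 0 ≤ g k := fun k => by positivity
    have hgmono : Monotone g := by
      intro a b hab
      have : (a:ℝ) ≤ b := Nat.cast_le.mpr hab
      simp only [hg]
      gcongr
    have hgstep : ∀ k, g (k+1) - g k = T / M := by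
      intro k
      simp only [hg]
      push_cast
      field_simp
      ring
    have hgT : ∀ k, k + 1 ≤ M → g (k+1) ≤ T := by
      intro k hk
      have : ((k:ℝ) + 1) ≤ M := by exact_mod_cast hk
      simp only [hg]
      rw [div_le_iff₀ hMR]
      push_cast
      nlinarith
    -- the grid sets
    set A : ℕ → Set Ω := fun k =>
      {ω | ENNReal.ofReal (g k) < τ ω ∧ τ ω ≤ ENNReal.ofReal (g (k+1))} with hA
    have hA𝒢 : ∀ k, MeasurableSet[𝒢] (A k) := by
      intro k
      exact hτmeas measurableSet_Ioc
    have hAm : ∀ k, MeasurableSet[m] (A k) := fun k => h𝒢 _ (hA𝒢 k)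
    have hAdisj0 : ∀ a b : ℕ, a ≠ b → Disjoint (A a) (A b) := by
      have key : ∀ a b : ℕ, a < b → Disjoint (A a) (A b) := by
        intro a b h
        refine Set.disjoint_left.mpr fun ω hωa hωb => ?_
        have h1 : τ ω ≤ ENNReal.ofReal (g (a+1)) := hωa.2
        have h2 : ENNReal.ofReal (g b) < τ ω := hωb.1
        have : ENNReal.ofReal (g (a+1)) ≤ ENNReal.ofReal (g b) :=
          ENNReal.ofReal_le_ofReal (hgmono h)
        exact absurd (h1.trans this) (not_le.mpr h2)
      intro a b hab
      rcases hab.lt_or_gt with h | h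
      · exact key a b h
      · exact (key b a h).symm
    have hAdisj : ∀ i : ℕ, (↑(Finset.range M) : Set ℕ).PairwiseDisjoint
        (fun k => {ω | θ ω = i} ∩ A k) := by
      intro i a _ b _ hab
      exact (hAdisj0 a b hab).mono inter_subset_right inter_subset_right
    -- events for the horizon
    set S : ℕ → ℕ → Set Ω := fun i k =>
      ({ω | ENNReal.ofReal (g k) < γ ω} \ {ω | ENNReal.ofReal (g (k+1)) < γ ω})
        ∩ ({ω | θ ω = i} ∩ A k) with hS
    -- covering
    have hcover : {ω | τ ω = γ ω ∧ γ ω ≤ ENNReal.ofReal T} ⊆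
        ⋃ i ∈ ({0,1} : Finset ℕ), ⋃ k ∈ Finset.range M, S i k := by
      intro ω ⟨hτγ, hγT⟩
      have hγtop : γ ω ≠ ⊤ := ne_top_of_le_ne_top ENNReal.ofReal_ne_top hγT
      set x : ℝ := (γ ω).toReal with hx
      have hx0 : 0 < x := ENNReal.toReal_pos (hγpos ω).ne' hγtop
      have hxT : x ≤ T := ENNReal.toReal_le_of_le_ofReal hT.le hγT
      obtain ⟨k, hkM, hk1, hk2⟩ := stmt_5_aux_grid hM0 hT hx0 hxT
      have hγx : γ ω = ENNReal.ofReal x := (ENNReal.ofReal_toReal hγtop).symm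
      have hin1 : ENNReal.ofReal (g k) < γ ω := by
        rw [hγx]; exact (ENNReal.ofReal_lt_ofReal_iff hx0).mpr hk1
      have hin2 : γ ω ≤ ENNReal.ofReal (g (k+1)) := by
        rw [hγx]
        apply ENNReal.ofReal_le_ofReal
        simpa [hg] using hk2
      have hωA : ω ∈ A k := ⟨by rw [hτγ]; exact hin1, by rw [hτγ]; exact hin2⟩
      have hωS : ω ∈ S (θ ω) k := ⟨⟨hin1, not_lt.mpr hin2⟩, rfl, hωA⟩
      refine Set.mem_iUnion₂.mpr ⟨θ ω, ?_, Set.mem_iUnion₂.mpr ⟨k, Finset.mem_range.mpr hkM, hωS⟩⟩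
      rcases hθval ω with h | h <;> simp [h]
    -- per-term bound
    have hterm : ∀ i ∈ ({0,1} : Finset ℕ), ∀ k < M,
        P (S i k) ≤ ENNReal.ofReal εr * P ({ω | θ ω = i} ∩ A k) := by
      intro i hi k hkM
      have hi' : i ∈ ({0,1} : Set ℕ) := by
        simp only [Finset.mem_insert, Finset.mem_singleton] at hi
        simpa using hi
      set B : Set Ω := {ω | θ ω = i} ∩ A k with hB
      set E1 : Set Ω := {ω | ENNReal.ofReal (g k) < γ ω} with hE1
      set E2 : Set Ω := {ω | ENNReal.ofReal (g (k+1)) < γ ω} with hE2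
      have hsub : E2 ∩ B ⊆ E1 ∩ B := by
        intro ω ⟨h2, hb⟩
        exact ⟨lt_of_le_of_lt (ENNReal.ofReal_le_ofReal (hgmono (Nat.le_succ k))) h2, hb⟩
      have hE2m : MeasurableSet[m] (E2 ∩ B) :=
        ((hγmeas measurableSet_Ioi).inter
          ((hθmeas (measurableSet_singleton i)).inter (hAm k)))
      have hSeq : S i k = (E1 ∩ B) \ (E2 ∩ B) := by
        ext ω
        simp only [hS, hE1, hE2, hB, Set.mem_inter_iff, Set.mem_diff]
        tauto
      have hkey1 : P (E1 ∩ B) = ENNReal.ofReal (F i (g k)) * P B := by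
        have := hsurv i hi' (g k) (hg0 k) (A k) (hA𝒢 k)
        rw [Set.inter_assoc] at this
        exact this
      have hkey2 : P (E2 ∩ B) = ENNReal.ofReal (F i (g (k+1))) * P B := by
        have := hsurv i hi' (g (k+1)) (hg0 (k+1)) (A k) (hA𝒢 k)
        rw [Set.inter_assoc] at this
        exact this
      have hFdiff : F i (g k) ≤ F i (g (k+1)) + εr := by
        have hmem1 : g k ∈ Icc (0:ℝ) T := ⟨hg0 k, (hgmono (Nat.le_succ k)).trans (hgT k hkM)⟩
        have hmem2 : g (k+1) ∈ Icc (0:ℝ) T := ⟨hg0 (k+1), hgT k hkM⟩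
        have hdist : |g k - g (k+1)| < δ := by
          rw [abs_sub_comm, abs_of_nonneg (by linarith [hgmono (Nat.le_succ k)] : 
            (0:ℝ) ≤ g (k+1) - g k), hgstep k]
          exact hmesh
        have : |F i (g k) - F i (g (k+1))| < εr := by
          rw [Set.mem_insert_iff, Set.mem_singleton_iff] at hi'
          rcases hi' with rfl | rfl
          · exact hδ0 _ hmem1 _ hmem2 (lt_of_lt_of_le hdist (min_le_left _ _))
          · exact hδ1 _ hmem1 _ hmem2 (lt_of_lt_of_le hdist (min_le_right _ _))
        have := abs_le.mp this.le
        linarith [this.2]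
      rw [hSeq, measure_diff hsub hE2m.nullMeasurableSet (measure_ne_top P _), hkey1, hkey2]
      rw [tsub_le_iff_right]
      calc ENNReal.ofReal (F i (g k)) * P B
          ≤ ENNReal.ofReal (F i (g (k+1)) + εr) * P B :=
            mul_le_mul_left (ENNReal.ofReal_le_ofReal hFdiff) _
        _ = (ENNReal.ofReal (F i (g (k+1))) + ENNReal.ofReal εr) * P B := by
            rw [ENNReal.ofReal_add (le_of_lt (hFpos i _ (hg0 (k+1)))) hεr0.le]
        _ = ENNReal.ofReal εr * P B + ENNReal.ofReal (F i (g (k+1))) * P B := by ring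
    -- sum over columns
    have hsumcol : ∀ i ∈ ({0,1} : Finset ℕ),
        ∑ k ∈ Finset.range M, P ({ω | θ ω = i} ∩ A k) ≤ 1 := by
      intro i hi
      have hdisj : (↑(Finset.range M) : Set ℕ).PairwiseDisjoint
          (fun k => {ω | θ ω = i} ∩ A k) := by
        exact hAdisj i
      have hmeas : ∀ k ∈ Finset.range M, MeasurableSet[m] ({ω | θ ω = i} ∩ A k) :=
        fun k _ => ((hθmeas (measurableSet_singleton i)).inter (hAm k))
      rw [← measure_biUnion_finset hdisj hmeas]
      exact prob_le_one
    -- put everything together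
    calc P {ω | τ ω = γ ω ∧ γ ω ≤ ENNReal.ofReal T}
        ≤ P (⋃ i ∈ ({0,1} : Finset ℕ), ⋃ k ∈ Finset.range M, S i k) := measure_mono hcover
      _ ≤ ∑ i ∈ ({0,1} : Finset ℕ), P (⋃ k ∈ Finset.range M, S i k) :=
          measure_biUnion_finset_le _ _
      _ ≤ ∑ i ∈ ({0,1} : Finset ℕ), ∑ k ∈ Finset.range M, P (S i k) :=
          Finset.sum_le_sum fun i _ => measure_biUnion_finset_le _ _
      _ ≤ ∑ i ∈ ({0,1} : Finset ℕ), ∑ k ∈ Finset.range M,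
            ENNReal.ofReal εr * P ({ω | θ ω = i} ∩ A k) :=
          Finset.sum_le_sum fun i hi => Finset.sum_le_sum fun k hk =>
            hterm i hi k (Finset.mem_range.mp hk)
      _ = ∑ i ∈ ({0,1} : Finset ℕ), ENNReal.ofReal εr *
            ∑ k ∈ Finset.range M, P ({ω | θ ω = i} ∩ A k) := by
          simp [Finset.mul_sum]
      _ ≤ ∑ i ∈ ({0,1} : Finset ℕ), ENNReal.ofReal εr * 1 :=
          Finset.sum_le_sum fun i hi => by gcongr; exact hsumcol i hi
      _ = 2 * ENNReal.ofReal εr := by simp [two_mul]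
      _ = ENNReal.ofReal (2 * εr) := by
          rw [ENNReal.ofReal_mul (by norm_num)]
          simp [ENNReal.ofReal_ofNat]
      _ = ENNReal.ofReal ε := by rw [hεr]; ring_nf
      _ = (ε : ℝ≥0∞) := ENNReal.ofReal_coe_nnreal
  -- conclude
  have hcover2 : {ω | τ ω = γ ω ∧ γ ω < ⊤} ⊆
      ⋃ N : ℕ, {ω | τ ω = γ ω ∧ γ ω ≤ ENNReal.ofReal ((N : ℝ) + 1)} := by
    intro ω ⟨h1, h2⟩
    obtain ⟨N, hN⟩ := exists_nat_gt (γ ω).toReal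
    refine Set.mem_iUnion.mpr ⟨N, h1, ?_⟩
    rw [← ENNReal.ofReal_toReal h2.ne]
    exact ENNReal.ofReal_le_ofReal (by linarith)
  exact measure_mono_null hcover2
    (measure_iUnion_null fun N => main ((N : ℝ) + 1) (by positivity))
end

section
/- Let ω ≠ 0, r > 0, λ_0, λ_1 ≥ 0, c > 0, d > 0, let γ > 1 be the unique solution of (ω²/2)·γ·(γ−1) + (λ_0−λ_1)·γ − (r+λ_0) = 0 with γ > 1, and set b := cγ/(d(γ−1)). Define v : (0,∞) → ℝ by v(φ) = (d·b^{1−γ}/γ)·φ^γ for φ ∈ (0,b) and v(φ) = dφ − c for φ ≥ b. Then v is continuously differentiable on (0,∞), is twice continuously differentiable on (0,b), satisfies (ω²/2)·φ²·v''(φ) + (λ_0−λ_1)·φ·v'(φ) − (r+λ_0)·v(φ) = 0 for all φ ∈ (0,b), and fulfils the boundary and smooth-fit conditions v(b) = db − c and v'(b) = d. -/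
/-!
On `(0, b)` the value function is `A φ ^ γ`, and a power `φ ^ γ` solves the Euler equation
`(ω²/2) φ² v'' + (λ₀ - λ₁) φ v' - (r + λ₀) v = 0` exactly when `γ` is a root of its indicial
polynomial. The choices of `A = d b ^ (1 - γ) / γ` and of `b` are precisely those for which the
power branch and the payoff `d φ - c` agree at `b` together with their first derivatives, and
gluing two `C¹` functions with matching value and slope at a point gives a `C¹` function.
-/

open Set Topology

section Gluing

variable {f g f' g' : ℝ → ℝ} {b : ℝ}

theorem hasDerivAt_ite_lt (hf : ∀ x, HasDerivAt f (f' x) x) (hg : ∀ x, HasDerivAt g (g' x) x)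
    (hfg : f b = g b) (hfg' : f' b = g' b) (x : ℝ) :
    HasDerivAt (fun y => if y < b then f y else g y) (if x < b then f' x else g' x) x := by
  rcases lt_trichotomy x b with hx | rfl | hx
  · rw [if_pos hx]
    refine (hf x).congr_of_eventuallyEq ?_
    filter_upwards [Iio_mem_nhds hx] with y hy using if_pos hy
  · rw [if_neg (lt_irrefl x)]
    have hleft : HasDerivWithinAt (fun y => if y < x then f y else g y) (g' x) (Iic x) x := by
      refine hfg' ▸ (hf x).hasDerivWithinAt.congr (fun y hy => ?_) (by simp [hfg])
      rcases (mem_Iic.1 hy).lt_or_eq with h | rfl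
      · exact if_pos h
      · simp [hfg]
    have hright : HasDerivWithinAt (fun y => if y < x then f y else g y) (g' x) (Ici x) x :=
      (hg x).hasDerivWithinAt.congr (fun y hy => if_neg (not_lt.2 hy)) (by simp)
    simpa only [Iic_union_Ici, hasDerivWithinAt_univ] using hleft.union hright
  · rw [if_neg (not_lt.2 hx.le)]
    refine (hg x).congr_of_eventuallyEq ?_
    filter_upwards [Ioi_mem_nhds hx] with y hy using if_neg (not_lt.2 hy.le)

theorem contDiff_one_ite_lt (hf : ∀ x, HasDerivAt f (f' x) x) (hg : ∀ x, HasDerivAt g (g' x) x)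
    (hf' : Continuous f') (hg' : Continuous g') (hfg : f b = g b) (hfg' : f' b = g' b) :
    ContDiff ℝ 1 (fun y => if y < b then f y else g y) := by
  have hderiv := hasDerivAt_ite_lt hf hg hfg hfg'
  refine contDiff_one_iff_deriv.2 ⟨fun x => (hderiv x).differentiableAt, ?_⟩
  rw [funext fun x => (hderiv x).deriv]
  simp_rw [← not_le, ite_not]
  exact hg'.if_le hf' continuous_const continuous_id fun x hx => hx ▸ hfg'.symm

end Gluing

theorem euler_const_mul_rpow {x : ℝ} (hx : 0 < x) (a p q A γ : ℝ) :
    a * x ^ 2 * deriv (deriv fun y => A * y ^ γ) x + p * x * deriv (fun y => A * y ^ γ) x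
      - q * (A * x ^ γ) = (a * γ * (γ - 1) + p * γ - q) * (A * x ^ γ) := by
  simp only [deriv_const_mul_field', Real.deriv_rpow_const',
    Real.rpow_sub hx, Real.rpow_one]
  field_simp

theorem rpow_value_fit {b c d γ : ℝ} (hb : 0 < b) (hγ : γ ≠ 0) (hbc : d * b * (γ - 1) = c * γ) :
    d * b ^ (1 - γ) / γ * b ^ γ = d * b - c := by
  have hc : c = d * b * (γ - 1) / γ := by field_simp; linarith
  rw [div_mul_eq_mul_div, mul_assoc, ← Real.rpow_add hb, sub_add_cancel, Real.rpow_one, hc]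
  field_simp
  ring

theorem rpow_slope_fit {b d γ : ℝ} (hb : 0 < b) (hγ : γ ≠ 0) :
    d * b ^ (1 - γ) / γ * (γ * b ^ (γ - 1)) = d := by
  calc d * b ^ (1 - γ) / γ * (γ * b ^ (γ - 1)) = d * b ^ (1 - γ + (γ - 1)) := by
        rw [Real.rpow_add hb]; field_simp
    _ = d := by simp

theorem stmt_11_general (ω r l₀ l₁ c d γ b : ℝ)
    (hc : 0 < c) (hd : 0 < d)
    (hγ : 1 < γ)
    (hquad : ω ^ 2 / 2 * γ * (γ - 1) + (l₀ - l₁) * γ - (r + l₀) = 0)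
    (hb : b = c * γ / (d * (γ - 1)))
    (v : ℝ → ℝ)
    (hv : ∀ φ : ℝ, v φ = if φ < b then d * b ^ (1 - γ) / γ * φ ^ γ else d * φ - c) :
    ContDiffOn ℝ 1 v (Ioi 0) ∧
    ContDiffOn ℝ 2 v (Ioo 0 b) ∧
    (∀ φ ∈ Ioo (0 : ℝ) b,
      ω ^ 2 / 2 * φ ^ 2 * deriv (deriv v) φ + (l₀ - l₁) * φ * deriv v φ - (r + l₀) * v φ = 0) ∧
    v b = d * b - c ∧
    deriv v b = d := by
  have hγ1 : 0 < γ - 1 := sub_pos.2 hγ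
  have hb0 : 0 < b := by rw [hb]; positivity
  set A := d * b ^ (1 - γ) / γ
  have hvalue : A * b ^ γ = d * b - c :=
    rpow_value_fit hb0 (by positivity) (by rw [hb]; field_simp)
  have hslope : A * (γ * b ^ (γ - 1)) = d := rpow_slope_fit hb0 (by positivity)
  replace hv : v = fun φ => if φ < b then A * φ ^ γ else d * φ - c := funext hv
  have hpow (x : ℝ) : HasDerivAt (fun y => A * y ^ γ) (A * (γ * x ^ (γ - 1))) x :=
    (Real.hasDerivAt_rpow_const (Or.inr hγ.le)).const_mul A
  have hlin (x : ℝ) : HasDerivAt (fun y => d * y - c) d x := by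
    simpa using ((hasDerivAt_id x).const_mul d).sub_const c
  have hnear {φ : ℝ} (hφ : φ < b) : v =ᶠ[𝓝 φ] fun y => A * y ^ γ := by
    filter_upwards [Iio_mem_nhds hφ] with y hy
    rw [hv]
    exact if_pos hy
  refine ⟨?_, fun φ hφ => ?_, fun φ hφ => ?_, by simp [hv], ?_⟩
  · have hcont : Continuous fun x => A * (γ * x ^ (γ - 1)) :=
      continuous_const.mul (continuous_const.mul (continuous_id.rpow_const fun _ => Or.inr hγ1.le))
    rw [hv]
    exact (contDiff_one_ite_lt hpow hlin hcont continuous_const hvalue hslope).contDiffOn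
  · exact ((contDiffAt_const.mul (Real.contDiffAt_rpow_const_of_ne hφ.1.ne')).congr_of_eventuallyEq
      (hnear hφ.2)).contDiffWithinAt
  · rw [(hnear hφ.2).deriv.deriv_eq, (hnear hφ.2).deriv_eq, (hnear hφ.2).eq_of_nhds,
      euler_const_mul_rpow hφ.1, hquad, zero_mul]
  · rw [hv, (hasDerivAt_ite_lt hpow hlin hvalue hslope b).deriv]
    simp

/-- The explicit value function of the hiring problem (Section 5): smoothness,
the ODE in the continuation region `(0,b)`, value matching and smooth fit at `b`.
Here `l₀, l₁` play the role of the rates `λ₀, λ₁`. -/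
theorem stmt_11 (ω r l₀ l₁ c d γ b : ℝ)
    (hω : ω ≠ 0) (hr : 0 < r) (hl₀ : 0 ≤ l₀) (hl₁ : 0 ≤ l₁) (hc : 0 < c) (hd : 0 < d)
    (hγ : 1 < γ)
    (hquad : ω ^ 2 / 2 * γ * (γ - 1) + (l₀ - l₁) * γ - (r + l₀) = 0)
    (hb : b = c * γ / (d * (γ - 1)))
    (v : ℝ → ℝ)
    (hv : ∀ φ : ℝ, v φ = if φ < b then d * b ^ (1 - γ) / γ * φ ^ γ else d * φ - c) :
    ContDiffOn ℝ 1 v (Ioi 0) ∧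
    ContDiffOn ℝ 2 v (Ioo 0 b) ∧
    (∀ φ ∈ Ioo (0 : ℝ) b,
      ω ^ 2 / 2 * φ ^ 2 * deriv (deriv v) φ + (l₀ - l₁) * φ * deriv v φ - (r + l₀) * v φ = 0) ∧
    v b = d * b - c ∧
    deriv v b = d :=
  stmt_11_general ω r l₀ l₁ c d γ b hc hd hγ hquad hb v hv
end

section
/- Let ω ≠ 0, r > 0, λ_0, λ_1 ≥ 0, c > 0, d > 0, let γ > 1 be the unique solution of (ω²/2)·γ·(γ−1) + (λ_0−λ_1)·γ − (r+λ_0) = 0 with γ > 1, and set b := cγ/(d(γ−1)). Then for every φ ∈ (0,b): (d·b^{1−γ}/γ)·φ^γ > dφ − c. -/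
open Set

/-- Strict majorization of the stopping payoff `dφ - c` by the candidate value function
in the continuation region `(0,b)` of the hiring problem.
Here `l₀, l₁` play the role of the rates `λ₀, λ₁`. -/
theorem stmt_12 (ω r l₀ l₁ c d γ b : ℝ)
    (hω : ω ≠ 0) (hr : 0 < r) (hl₀ : 0 ≤ l₀) (hl₁ : 0 ≤ l₁) (hc : 0 < c) (hd : 0 < d)
    (hγ : 1 < γ)
    (hquad : ω ^ 2 / 2 * γ * (γ - 1) + (l₀ - l₁) * γ - (r + l₀) = 0)
    (hb : b = c * γ / (d * (γ - 1))) :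
    ∀ φ ∈ Ioo (0 : ℝ) b, d * b ^ (1 - γ) / γ * φ ^ γ > d * φ - c := by
  have hγ1 : (0:ℝ) < γ - 1 := by linarith
  have hγ0 : (0:ℝ) < γ := by linarith
  have hb0 : 0 < b := by rw [hb]; positivity
  have hcγ : c * γ = d * b * (γ - 1) := by
    field_simp at hb; linarith [hb]
  intro φ hφ
  obtain ⟨hφ0, hφb⟩ := hφ
  set t : ℝ := φ / b with htdef
  have ht0 : 0 < t := div_pos hφ0 hb0
  have ht1 : t < 1 := (div_lt_one hb0).mpr hφb
  have hφeq : φ = t * b := by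
    rw [htdef, div_mul_cancel₀ _ hb0.ne']
  have hbern : 1 + γ * (t - 1) < t ^ γ := by
    have h := one_add_mul_self_lt_rpow_one_add (s := t - 1) (by linarith) (by linarith) hγ
    rwa [show (1:ℝ) + (t - 1) = t by ring] at h
  have hpow : φ ^ γ = t ^ γ * b ^ γ := by
    rw [hφeq, Real.mul_rpow ht0.le hb0.le]
  have hbb : b ^ (1 - γ) * b ^ γ = b := by
    rw [← Real.rpow_add hb0]; norm_num
  have htγ0 : 0 < t ^ γ := Real.rpow_pos_of_pos ht0 γ
  have hbγ0 : 0 < b ^ γ := Real.rpow_pos_of_pos hb0 γ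
  have hb1γ0 : 0 < b ^ (1 - γ) := Real.rpow_pos_of_pos hb0 _
  have key : d * b ^ (1 - γ) / γ * φ ^ γ = d * (b * t ^ γ) / γ := by
    rw [hpow, show d * b ^ (1 - γ) / γ * (t ^ γ * b ^ γ)
        = d * (b ^ (1 - γ) * b ^ γ * t ^ γ) / γ by ring, hbb]
  rw [gt_iff_lt, key, lt_div_iff₀ hγ0]
  have hdb : 0 < d * b := mul_pos hd hb0
  have h2 : d * b * (1 + γ * (t - 1)) = (d * φ - c) * γ := by
    rw [hφeq]; linear_combination hcγ
  have h3 := mul_lt_mul_of_pos_left hbern hdb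
  nlinarith [h2, h3]
end

section
/- Let σ > 0, μ_0 < r < μ_1, λ_0 > 0, ω := (μ_1−μ_0)/σ, let γ ∈ (0,1) be the unique positive root of (ω²/2)·γ·(γ−1) + (λ_0+μ_1−μ_0)·γ − (r+λ_0−μ_0) = 0, and set B := γ(r−μ_0)(μ_1−r) / ((1−γ)(r+λ_0−μ_0)(λ_0+μ_1−r)). Define v̄ : (0,∞) → ℝ by v̄(φ) = (r−μ_0)/((1−γ)(r+λ_0−μ_0)) · (φ/B)^γ − (λ_0/(μ_1−r))·φ + λ_0/(r+λ_0−μ_0) for φ ∈ (0,B), and v̄(φ) = 1 + φ for φ ≥ B. Then B > 0, v̄ satisfies (ω²φ²/2)·v̄''(φ) + (λ_0+μ_1−μ_0)·φ·v̄'(φ) − (r+λ_0−μ_0)·v̄(φ) + λ_0·(1+φ) = 0 for all φ ∈ (0,B), and v̄ is continuously differentiable on (0,∞) with v̄(B) = 1 + B and v̄'(B) = 1. -/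
open Set Filter Topology

/-!
On `(0, B)` the candidate is a power solution `(φ / B) ^ γ` of the homogeneous Euler equation
plus an affine particular solution; the power term is annihilated exactly because `γ` solves the
characteristic quadratic. The constants are chosen so that at `B` both the value and the slope of
the left branch agree with those of `1 + φ`, and a function glued from two `C¹` pieces that match
to first order at the junction is again `C¹`.
-/

section Gluing

variable {F : Type*} [NormedAddCommGroup F] [NormedSpace ℝ F] {f g : ℝ → F} {b : ℝ}

theorem HasDerivAt.ite_lt {f' : F} (hf : HasDerivAt f f' b) (hg : HasDerivAt g f' b)
    (hfg : f b = g b) : HasDerivAt (fun x => if x < b then f x else g x) f' b := by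
  have hleft : HasDerivWithinAt (fun x => if x < b then f x else g x) f' (Iic b) b := by
    refine hf.hasDerivWithinAt.congr (fun x hx => ?_) (by simp [hfg])
    rcases (mem_Iic.mp hx).lt_or_eq with h | rfl
    · simp [h]
    · simp [hfg]
  have hright : HasDerivWithinAt (fun x => if x < b then f x else g x) f' (Ici b) b :=
    hg.hasDerivWithinAt.congr (fun x hx => by simp [not_lt.mpr (mem_Ici.mp hx)]) (by simp)
  simpa [Iic_union_Ici] using hleft.union hright

theorem ContDiffOn.ite_lt {U : Set ℝ} (hU : IsOpen U) (hf : ContDiffOn ℝ 1 f U)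
    (hg : ContDiffOn ℝ 1 g U) (hfg : f b = g b) (hfg' : deriv f b = deriv g b) :
    ContDiffOn ℝ 1 (fun x => if x < b then f x else g x) U := by
  have hdiff {h : ℝ → F} (hh : ContDiffOn ℝ 1 h U) {x : ℝ} (hx : x ∈ U) :
      HasDerivAt h (deriv h x) x :=
    ((hh.differentiableOn one_ne_zero x hx).differentiableAt (hU.mem_nhds hx)).hasDerivAt
  have hderiv : ∀ x ∈ U, HasDerivAt (fun x => if x < b then f x else g x)
      (if x < b then deriv f x else deriv g x) x := by
    intro x hx
    rcases lt_trichotomy x b with h | rfl | h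
    · rw [if_pos h]
      refine (hdiff hf hx).congr_of_eventuallyEq ?_
      filter_upwards [Iio_mem_nhds h] with y hy
      simp [mem_Iio.mp hy]
    · rw [if_neg (lt_irrefl x)]
      exact (hfg' ▸ hdiff hf hx).ite_lt (hdiff hg hx) hfg
    · rw [if_neg (not_lt.mpr h.le)]
      refine (hdiff hg hx).congr_of_eventuallyEq ?_
      filter_upwards [Ioi_mem_nhds h] with y hy
      simp [not_lt.mpr (mem_Ioi.mp hy).le]
  have hcont : ContinuousOn (fun x => if x < b then deriv f x else deriv g x) U := by
    refine ContinuousOn.if (fun a ha => ?_)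
      ((hf.continuousOn_deriv_of_isOpen hU le_rfl).mono inter_subset_left)
      ((hg.continuousOn_deriv_of_isOpen hU le_rfl).mono inter_subset_left)
    have hab : a ∈ frontier (Iio b) := ha.2
    rw [frontier_Iio, mem_singleton_iff] at hab
    rw [hab, hfg']
  rw [show (1 : WithTop ℕ∞) = 0 + 1 from rfl, contDiffOn_succ_iff_deriv_of_isOpen hU]
  refine ⟨fun x hx => (hderiv x hx).differentiableAt.differentiableWithinAt, by simp, ?_⟩
  exact contDiffOn_zero.mpr (hcont.congr fun x hx => (hderiv x hx).deriv)

end Gluing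

section PowerBranch

variable {A B γ k c x : ℝ}

theorem hasDerivAt_div_const_rpow (hx : x ≠ 0) (hB : B ≠ 0) :
    HasDerivAt (fun y => (y / B) ^ γ) (γ * (x / B) ^ γ / x) x := by
  refine (((hasDerivAt_id x).div_const B).rpow_const (Or.inl (div_ne_zero hx hB))).congr_deriv ?_
  rw [id, Real.rpow_sub_one (div_ne_zero hx hB)]
  field_simp

noncomputable def powerBranch (A B γ k c x : ℝ) : ℝ := A * (x / B) ^ γ - k * x + c

theorem contDiffAt_powerBranch {n : WithTop ℕ∞} (hx : x ≠ 0) (hB : B ≠ 0) :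
    ContDiffAt ℝ n (powerBranch A B γ k c) x :=
  ((contDiffAt_const.mul ((contDiffAt_id.div_const B).rpow_const_of_ne (div_ne_zero hx hB))).sub
    (contDiffAt_const.mul contDiffAt_id)).add contDiffAt_const

theorem hasDerivAt_powerBranch (hx : x ≠ 0) (hB : B ≠ 0) :
    HasDerivAt (powerBranch A B γ k c) (A * γ * (x / B) ^ γ / x - k) x := by
  refine ((((hasDerivAt_div_const_rpow hx hB).const_mul A).sub
    ((hasDerivAt_id x).const_mul k)).add_const c).congr_deriv ?_
  ring

theorem hasDerivAt_deriv_powerBranch (hx : x ≠ 0) (hB : B ≠ 0) :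
    HasDerivAt (deriv (powerBranch A B γ k c)) (A * γ * (γ - 1) * (x / B) ^ γ / x ^ 2) x := by
  have hderiv : deriv (powerBranch A B γ k c) =ᶠ[𝓝 x] fun y => A * γ * (y / B) ^ γ / y - k := by
    filter_upwards [isOpen_ne.mem_nhds hx] with y hy
    exact (hasDerivAt_powerBranch hy hB).deriv
  refine HasDerivAt.congr_of_eventuallyEq ?_ hderiv
  refine ((((hasDerivAt_div_const_rpow hx hB).const_mul (A * γ)).div (hasDerivAt_id x)
    hx).sub_const k).congr_deriv ?_
  simp only [id]
  field_simp

theorem euler_powerBranch (a b ρ : ℝ) (hx : x ≠ 0) (hB : B ≠ 0) :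
    a * x ^ 2 * deriv (deriv (powerBranch A B γ k c)) x + b * x * deriv (powerBranch A B γ k c) x
        - ρ * powerBranch A B γ k c x
      = A * (a * γ * (γ - 1) + b * γ - ρ) * (x / B) ^ γ + (ρ - b) * k * x - ρ * c := by
  rw [(hasDerivAt_deriv_powerBranch hx hB).deriv, (hasDerivAt_powerBranch hx hB).deriv,
    powerBranch]
  field_simp
  ring

end PowerBranch

theorem stmt_14_general (μ₀ μ₁ r l₀ ω γ B : ℝ)
    (hμ₀ : μ₀ < r) (hμ₁ : r < μ₁) (hl₀ : 0 < l₀)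
    (hγ : γ ∈ Ioo (0 : ℝ) 1)
    (hquad : ω ^ 2 / 2 * γ * (γ - 1) + (l₀ + μ₁ - μ₀) * γ - (r + l₀ - μ₀) = 0)
    (hB : B = γ * (r - μ₀) * (μ₁ - r) / ((1 - γ) * (r + l₀ - μ₀) * (l₀ + μ₁ - r)))
    (v : ℝ → ℝ)
    (hv : ∀ φ : ℝ, v φ =
      if φ < B then
        (r - μ₀) / ((1 - γ) * (r + l₀ - μ₀)) * (φ / B) ^ γ - l₀ / (μ₁ - r) * φ
          + l₀ / (r + l₀ - μ₀)
      else 1 + φ) :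
    0 < B ∧
    (∀ φ ∈ Ioo (0 : ℝ) B,
      ω ^ 2 * φ ^ 2 / 2 * deriv (deriv v) φ + (l₀ + μ₁ - μ₀) * φ * deriv v φ
        - (r + l₀ - μ₀) * v φ + l₀ * (1 + φ) = 0) ∧
    ContDiffOn ℝ 1 v (Ioi 0) ∧
    v B = 1 + B ∧
    deriv v B = 1 := by
  obtain ⟨hγ0, hγ1⟩ := hγ
  have hr₀ : 0 < r - μ₀ := by linarith
  have hr₁ : 0 < μ₁ - r := by linarith
  have hρ : 0 < r + l₀ - μ₀ := by linarith
  have hκ : 0 < l₀ + μ₁ - r := by linarith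
  have hγ₁ : 0 < 1 - γ := by linarith
  have hBpos : 0 < B := by rw [hB]; positivity
  set f := powerBranch ((r - μ₀) / ((1 - γ) * (r + l₀ - μ₀))) B γ (l₀ / (μ₁ - r))
    (l₀ / (r + l₀ - μ₀))
  have hv' : v = fun φ => if φ < B then f φ else 1 + φ := funext hv
  have hmatch : f B = 1 + B := by
    simp only [f, powerBranch, div_self hBpos.ne', Real.one_rpow]
    rw [hB]
    field_simp
    ring
  have hfit : HasDerivAt f 1 B := by
    refine (hasDerivAt_powerBranch hBpos.ne' hBpos.ne').congr_deriv ?_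
    rw [div_self hBpos.ne', Real.one_rpow, hB]
    field_simp
    ring
  have hline (x : ℝ) : HasDerivAt (fun φ => 1 + φ) 1 x := (hasDerivAt_id x).const_add 1
  have hglued := hfit.ite_lt (hline B) hmatch
  rw [← hv'] at hglued
  refine ⟨hBpos, fun φ hφ => ?_, ?_, by simp [hv'], hglued.deriv⟩
  · have hvf : v =ᶠ[𝓝 φ] f := by
      filter_upwards [Iio_mem_nhds hφ.2] with x hx
      simp [hv', mem_Iio.mp hx]
    rw [hvf.deriv.deriv_eq, hvf.deriv_eq, hvf.eq_of_nhds, mul_div_right_comm,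
      euler_powerBranch _ _ _ hφ.1.ne' hBpos.ne', hquad]
    field_simp
    ring
  · rw [hv']
    exact ContDiffOn.ite_lt isOpen_Ioi
      (fun x hx => (contDiffAt_powerBranch (ne_of_gt hx) hBpos.ne').contDiffWithinAt)
      (contDiffOn_const.add contDiffOn_id) hmatch (hfit.deriv.trans (hline B).deriv.symm)

/-- The explicit solution of the free-boundary problem for the short-position-closing
example: positivity of the boundary `B`, the ODE on `(0,B)`, `C¹`-regularity, value
matching and smooth fit at `B`. Here `l₀` plays the role of the recall rate `λ₀`. -/
theorem stmt_14 (σ μ₀ μ₁ r l₀ ω γ B : ℝ)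
    (hσ : 0 < σ) (hμ₀ : μ₀ < r) (hμ₁ : r < μ₁) (hl₀ : 0 < l₀)
    (hω : ω = (μ₁ - μ₀) / σ)
    (hγ : γ ∈ Ioo (0 : ℝ) 1)
    (hquad : ω ^ 2 / 2 * γ * (γ - 1) + (l₀ + μ₁ - μ₀) * γ - (r + l₀ - μ₀) = 0)
    (hB : B = γ * (r - μ₀) * (μ₁ - r) / ((1 - γ) * (r + l₀ - μ₀) * (l₀ + μ₁ - r)))
    (v : ℝ → ℝ)
    (hv : ∀ φ : ℝ, v φ =
      if φ < B then
        (r - μ₀) / ((1 - γ) * (r + l₀ - μ₀)) * (φ / B) ^ γ - l₀ / (μ₁ - r) * φ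
          + l₀ / (r + l₀ - μ₀)
      else 1 + φ) :
    0 < B ∧
    (∀ φ ∈ Ioo (0 : ℝ) B,
      ω ^ 2 * φ ^ 2 / 2 * deriv (deriv v) φ + (l₀ + μ₁ - μ₀) * φ * deriv v φ
        - (r + l₀ - μ₀) * v φ + l₀ * (1 + φ) = 0) ∧
    ContDiffOn ℝ 1 v (Ioi 0) ∧
    v B = 1 + B ∧
    deriv v B = 1 :=
  stmt_14_general μ₀ μ₁ r l₀ ω γ B hμ₀ hμ₁ hl₀ hγ hquad hB v hv
end

section
/- Let σ > 0, μ_0 < r < μ_1, λ_0 > 0, ω := (μ_1−μ_0)/σ, let γ ∈ (0,1) be the unique positive root of (ω²/2)·γ·(γ−1) + (λ_0+μ_1−μ_0)·γ − (r+λ_0−μ_0) = 0, and set B := γ(r−μ_0)(μ_1−r) / ((1−γ)(r+λ_0−μ_0)(λ_0+μ_1−r)). Then for every φ ∈ (0,B): (r−μ_0)/((1−γ)(r+λ_0−μ_0)) · (φ/B)^γ − (λ_0/(μ_1−r))·φ + λ_0/(r+λ_0−μ_0) ≤ 1 + φ. -/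
open Set

/-- The verification inequality `v̄ ≤ 1 + φ` on the continuation region `(0,B)` for the
short-position-closing example. Here `l₀` plays the role of the recall rate `λ₀`. -/
theorem stmt_15 (σ μ₀ μ₁ r l₀ ω γ B : ℝ)
    (hσ : 0 < σ) (hμ₀ : μ₀ < r) (hμ₁ : r < μ₁) (hl₀ : 0 < l₀)
    (hω : ω = (μ₁ - μ₀) / σ)
    (hγ : γ ∈ Ioo (0 : ℝ) 1)
    (hquad : ω ^ 2 / 2 * γ * (γ - 1) + (l₀ + μ₁ - μ₀) * γ - (r + l₀ - μ₀) = 0)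
    (hB : B = γ * (r - μ₀) * (μ₁ - r) / ((1 - γ) * (r + l₀ - μ₀) * (l₀ + μ₁ - r))) :
    ∀ φ ∈ Ioo (0 : ℝ) B,
      (r - μ₀) / ((1 - γ) * (r + l₀ - μ₀)) * (φ / B) ^ γ - l₀ / (μ₁ - r) * φ
        + l₀ / (r + l₀ - μ₀) ≤ 1 + φ := by
  obtain ⟨hγ0, hγ1⟩ := hγ
  intro φ hφ
  obtain ⟨hφ0, hφB⟩ := hφ
  have h1 : (0:ℝ) < 1 - γ := by linarith
  have h2 : (0:ℝ) < r + l₀ - μ₀ := by linarith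
  have h3 : (0:ℝ) < μ₁ - r := by linarith
  have h4 : (0:ℝ) < l₀ + μ₁ - r := by linarith
  have h5 : (0:ℝ) < r - μ₀ := by linarith
  have hBpos : 0 < B := by rw [hB]; positivity
  have hs : (-1:ℝ) ≤ φ / B - 1 := by
    have : 0 < φ / B := div_pos hφ0 hBpos
    linarith
  have hbern : (φ / B) ^ γ ≤ 1 + γ * (φ / B - 1) := by
    have h := rpow_one_add_le_one_add_mul_self hs hγ0.le hγ1.le
    have he : (1 + (φ / B - 1)) = φ / B := by ring
    rwa [he] at h
  have hA : 0 < (r - μ₀) / ((1 - γ) * (r + l₀ - μ₀)) := by positivity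
  have key := mul_le_mul_of_nonneg_left hbern hA.le
  have hid : (r - μ₀) / ((1 - γ) * (r + l₀ - μ₀)) * (1 + γ * (φ / B - 1))
      - l₀ / (μ₁ - r) * φ + l₀ / (r + l₀ - μ₀) = 1 + φ := by
    rw [hB]
    field_simp
    ring
  linarith [key]
end
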